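/- arXiv:2207.14122 — 2 statements merged into one kernel-verified Lean document; each statement's English description precedes it below -/
import Mathlib

section
/- Let G be a connected simple graph with at least 3 vertices. Then dist'(G) ≤ det'(G) + 1. -/
/-- `S` is a vertex determining set of `G`: the only automorphism of `G`
fixing every vertex of `S` is the identity. -/
def IsVertexDetSet {V : Type*} (G : SimpleGraph V) (S : Set V) : Prop :=
  ∀ φ : G ≃g G, (∀ v ∈ S, φ v = v) → ∀ w, φ w = w

/-- `T` is an edge determining set of `G`: `T` consists of edges of `G`, and the only
automorphism of `G` mapping each edge of `T` to itself (as an unordered pair) is the identity. -/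
def IsEdgeDetSet {V : Type*} (G : SimpleGraph V) (T : Set (Sym2 V)) : Prop :=
  T ⊆ G.edgeSet ∧ ∀ φ : G ≃g G, (∀ e ∈ T, Sym2.map φ e = e) → ∀ w, φ w = w

/-- The determining number `det(G)`: the minimum size of a vertex determining set. -/
noncomputable def detNum {V : Type*} (G : SimpleGraph V) : ℕ :=
  sInf {k | ∃ S : Finset V, S.card = k ∧ IsVertexDetSet G ↑S}

/-- The determining index `det'(G)`: the minimum size of an edge determining set. -/
noncomputable def detIndex {V : Type*} (G : SimpleGraph V) : ℕ :=
  sInf {k | ∃ T : Finset (Sym2 V), T.card = k ∧ IsEdgeDetSet G ↑T}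

/-- The distinguishing index `dist'(G)`: the minimum number `k` of colors in an edge
coloring of `G` such that the only automorphism of `G` preserving the coloring is
the identity. -/
noncomputable def distIndex {V : Type*} (G : SimpleGraph V) : ℕ :=
  sInf {k | ∃ c : Sym2 V → Fin k,
    ∀ φ : G ≃g G, (∀ e ∈ G.edgeSet, c (Sym2.map φ e) = c e) → ∀ w, φ w = w}


lemma fix_all_edges {V : Type*} [Fintype V] (G : SimpleGraph V)
    (hconn : G.Connected) (hcard : 3 ≤ Fintype.card V) (φ : G ≃g G)
    (hfix : ∀ e ∈ G.edgeSet, Sym2.map φ e = e) : ∀ w, φ w = w := by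
  classical
  by_contra h
  push_neg at h
  obtain ⟨w, hw⟩ := h
  -- every neighbor of w is φ w
  have key : ∀ x, G.Adj w x → x = φ w ∧ φ x = w := by
    intro x hx
    have h1 := hfix s(w, x) hx
    rw [Sym2.map_pair_eq, Sym2.eq_iff] at h1
    rcases h1 with ⟨h1, h2⟩ | ⟨h1, h2⟩
    · exact absurd h1 hw
    · exact ⟨h1.symm, h2⟩
  -- w has a neighbor
  obtain ⟨z0, hz0⟩ := Fintype.exists_ne_of_one_lt_card (by omega) w
  have hu : ∃ u, G.Adj w u := by
    obtain ⟨p⟩ := hconn.preconnected w z0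
    cases p with
    | nil => exact absurd rfl hz0
    | cons hadj _ => exact ⟨_, hadj⟩
  obtain ⟨u, hadj⟩ := hu
  obtain ⟨huw, hphu⟩ := key u hadj
  have hwu : w ≠ u := G.ne_of_adj hadj
  have key2 : ∀ x, G.Adj u x → x = w := by
    intro x hx
    have h1 := hfix s(u, x) hx
    rw [Sym2.map_pair_eq, Sym2.eq_iff] at h1
    rcases h1 with ⟨h1, h2⟩ | ⟨h1, h2⟩
    · rw [hphu] at h1; exact absurd h1 hwu
    · rw [hphu] at h1; exact h1.symm
  have key1 : ∀ x, G.Adj w x → x = u := by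
    intro x hx
    rw [(key x hx).1, ← huw]
  have closed : ∀ a b, G.Walk a b → (a = w ∨ a = u) → (b = w ∨ b = u) := by
    intro a b p
    induction p with
    | nil => exact id
    | cons hadj' p ih =>
      intro ha
      apply ih
      rcases ha with rfl | rfl
      · right; exact key1 _ hadj'
      · left; exact key2 _ hadj'
  -- there is a third vertex
  have hall : ∀ z : V, z = w ∨ z = u := by
    intro z
    obtain ⟨p⟩ := hconn.preconnected w z
    exact closed w z p (Or.inl rfl)
  have hsub : (Finset.univ : Finset V) ⊆ {w, u} := by
    intro z _
    rcases hall z with rfl | rfl <;> simp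
  have : Fintype.card V ≤ 2 := by
    calc Fintype.card V = Finset.univ.card := rfl
    _ ≤ ({w, u} : Finset V).card := Finset.card_le_card hsub
    _ ≤ 2 := Finset.card_le_two
  omega

theorem distIndex_le_detIndex_add_one {V : Type*} [Fintype V] (G : SimpleGraph V)
    (hconn : G.Connected) (hcard : 3 ≤ Fintype.card V) :
    distIndex G ≤ detIndex G + 1 := by
  classical
  have hne : {k | ∃ T : Finset (Sym2 V), T.card = k ∧ IsEdgeDetSet G ↑T}.Nonempty := by
    refine ⟨_, G.edgeSet.toFinite.toFinset, rfl, ?_, ?_⟩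
    · rw [Set.Finite.coe_toFinset]
    · intro φ hφ
      exact fix_all_edges G hconn hcard φ (fun e he => hφ e (by simpa using he))
  obtain ⟨T, hTcard, hTsub, hTdet⟩ := Nat.sInf_mem hne
  set k := detIndex G with hk
  have hcardT : Fintype.card {x // x ∈ T} = k := by
    rw [Fintype.card_coe]; exact hTcard
  let g : {x // x ∈ T} ≃ Fin k := Fintype.equivFinOfCardEq hcardT
  let c : Sym2 V → Fin (k + 1) := fun e =>
    if h : e ∈ T then (g ⟨e, h⟩).castSucc else Fin.last k
  apply Nat.sInf_le
  refine ⟨c, fun φ hφ => ?_⟩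
  apply hTdet φ
  intro e he
  have heT : e ∈ T := Finset.mem_coe.mp he
  have heE : e ∈ G.edgeSet := hTsub (by simpa using he)
  have hmapE : Sym2.map φ e ∈ G.edgeSet := φ.toHom.map_mem_edgeSet heE
  have hc := hφ e heE
  have hce : c e = (g ⟨e, heT⟩).castSucc := by simp only [c]; rw [dif_pos heT]
  by_cases hm : Sym2.map φ e ∈ T
  · have : c (Sym2.map φ e) = (g ⟨_, hm⟩).castSucc := by simp only [c]; rw [dif_pos hm]
    rw [this, hce] at hc
    have := g.injective (Fin.castSucc_injective _ hc)
    exact congrArg Subtype.val this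
  · have : c (Sym2.map φ e) = Fin.last k := by simp only [c]; rw [dif_neg hm]
    rw [this, hce] at hc
    exact absurd hc.symm (Fin.castSucc_lt_last _).ne
end

section
/- Let G be a tree (a connected acyclic simple graph) with at least 3 vertices. Then det(G) = det'(G). -/
namespace SimpleGraph

variable {V V' : Type*} {G : SimpleGraph V} {G' : SimpleGraph V'}

lemma Reachable.dist_map_le (f : G →g G') {u v : V} (h : G.Reachable u v) :
    G'.dist (f u) (f v) ≤ G.dist u v := by
  obtain ⟨p, hp⟩ := h.exists_walk_length_eq_dist
  calc G'.dist (f u) (f v) ≤ (p.map f).length := dist_le _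
    _ = G.dist u v := by rw [Walk.length_map, hp]

lemma Iso.dist_map (φ : G ≃g G') (u v : V) : G'.dist (φ u) (φ v) = G.dist u v := by
  by_cases h : G.Reachable u v
  · refine le_antisymm (h.dist_map_le φ.toHom) ?_
    simpa using (Iso.reachable_iff (φ := φ)).mpr h |>.dist_map_le φ.symm.toHom
  · rw [dist_eq_zero_of_not_reachable h,
      dist_eq_zero_of_not_reachable (mt Iso.reachable_iff.mp h)]

lemma Reachable.exists_adj_dist_lt {x v : V} (h : G.Reachable x v) (hne : x ≠ v) :
    ∃ t, G.Adj v t ∧ G.dist x t < G.dist x v := by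
  obtain ⟨p, hp⟩ := h.symm.exists_walk_length_eq_dist
  cases p with
  | nil => exact absurd rfl hne
  | cons hadj q =>
    refine ⟨_, hadj, ?_⟩
    rw [dist_comm, dist_comm (u := x)]
    have := dist_le q
    simp only [Walk.length_cons] at hp
    omega

lemma IsTree.eq_of_adj_of_dist_lt (hG : G.IsTree) {x u w w' : V} (hw : G.Adj u w)
    (hw' : G.Adj u w') (hxw : G.dist x w < G.dist x u) (hxw' : G.dist x w' < G.dist x u) :
    w = w' := by
  have shortest_via : ∀ {t} (ht : G.Adj u t), G.dist x t < G.dist x u →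
      ∃ p : G.Walk x t, (p.concat ht.symm).IsPath := by
    intro t ht hlt
    obtain ⟨p, hp⟩ := (hG.connected x t).exists_walk_length_eq_dist
    refine ⟨p, Walk.isPath_of_length_eq_dist _ ?_⟩
    have := hG.dist_eq_dist_add_one_of_adj x ht
    rw [Walk.length_concat]
    omega
  obtain ⟨p, hp⟩ := shortest_via hw hxw
  obtain ⟨p', hp'⟩ := shortest_via hw' hxw'
  -- `w` and `w'` are both the penultimate vertex of the unique path from `x` to `u`.
  have := congrArg Subtype.val <| (hG.isAcyclic.subsingleton_path x u).elim ⟨_, hp⟩ ⟨_, hp'⟩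
  exact (Walk.concat_inj this).1

open scoped Classical in
/-- For an edge `uv` of a tree, the vertex set of the component of `G - uv` containing `v`. -/
noncomputable def branch [Fintype V] (G : SimpleGraph V) (u v : V) : Finset V :=
  Finset.univ.filter fun x => G.dist x v < G.dist x u

variable [Fintype V]

@[simp]
lemma mem_branch {u v x : V} : x ∈ G.branch u v ↔ G.dist x v < G.dist x u := by
  simp [branch]

lemma left_notMem_branch (u v : V) : u ∉ G.branch u v := by
  simp

lemma card_branch_map [Fintype V'] (φ : G ≃g G') (u v : V) :
    (G'.branch (φ u) (φ v)).card = (G.branch u v).card := by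
  rw [← Finset.card_map φ.toEquiv.toEmbedding]
  congr 1
  ext x
  obtain ⟨y, rfl⟩ := φ.surjective x
  rw [mem_branch, Iso.dist_map, Iso.dist_map, ← mem_branch]
  exact (Finset.mem_map' _).symm

namespace IsTree

lemma card_branch_add_card_branch (hG : G.IsTree) {u v : V} (h : G.Adj u v) :
    (G.branch u v).card + (G.branch v u).card = Fintype.card V := by
  classical
  have hcompl : G.branch v u = (G.branch u v)ᶜ := by
    ext x
    have := hG.dist_ne_of_adj x h
    simp only [Finset.mem_compl, mem_branch]
    omega
  rw [hcompl, Finset.card_add_card_compl]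

lemma card_branch_add_card_branch_lt (hG : G.IsTree) {u w w' : V} (hw : G.Adj u w)
    (hw' : G.Adj u w') (hne : w ≠ w') :
    (G.branch u w).card + (G.branch u w').card < Fintype.card V := by
  classical
  have hdisj : Disjoint (G.branch u w) (G.branch u w') :=
    Finset.disjoint_left.mpr fun x hx hx' =>
      hne (hG.eq_of_adj_of_dist_lt hw hw' (mem_branch.mp hx) (mem_branch.mp hx'))
  have hu : u ∉ G.branch u w ∪ G.branch u w' := by
    simp only [Finset.mem_union, left_notMem_branch, or_self, not_false_eq_true]
  rw [← Finset.card_union_of_disjoint hdisj]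
  exact Finset.card_lt_univ_of_notMem hu

lemma apply_eq_of_card_le_two_mul_card_branch (hG : G.IsTree) {u v : V} (h : G.Adj u v)
    (hheavy : Fintype.card V ≤ 2 * (G.branch u v).card) {φ : G ≃g G} (hu : φ u = u) :
    φ v = v := by
  by_contra hne
  have hadj : G.Adj u (φ v) := hu ▸ φ.map_adj_iff.mpr h
  have hcard : (G.branch u (φ v)).card = (G.branch u v).card := by
    rw [← card_branch_map φ u v, hu]
  have := hG.card_branch_add_card_branch_lt h hadj (Ne.symm hne)
  omega

lemma two_mul_card_branch_eq_of_swap (hG : G.IsTree) {u v : V} (h : G.Adj u v) {φ : G ≃g G}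
    (hu : φ u = v) (hv : φ v = u) : 2 * (G.branch u v).card = Fintype.card V := by
  have hcard : (G.branch v u).card = (G.branch u v).card := by
    rw [← card_branch_map φ u v, hu, hv]
  have := hG.card_branch_add_card_branch h
  omega

lemma exists_adj_two_mul_card_branch_ne (hG : G.IsTree) (hcard : 3 ≤ Fintype.card V) (v : V) :
    ∃ w, G.Adj v w ∧ 2 * (G.branch v w).card ≠ Fintype.card V := by
  classical
  have : Nontrivial V := Fintype.one_lt_card_iff_nontrivial.mp (by omega)
  obtain ⟨x, hx⟩ := exists_ne v
  obtain ⟨w, hw, -⟩ := (hG.connected x v).exists_adj_dist_lt hx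
  rcases ne_or_eq (2 * (G.branch v w).card) (Fintype.card V) with hunbal | hbal
  · exact ⟨w, hw, hunbal⟩
  by_cases hleaf : ∀ w', G.Adj v w' → w' = w
  · -- The branch through the only neighbour is everything but `v`, which would force `n = 2`.
    have hsub : Finset.univ.erase v ⊆ G.branch v w := fun y hy => by
      have hyv := Finset.ne_of_mem_erase hy
      obtain ⟨t, ht, hlt⟩ := (hG.connected y v).exists_adj_dist_lt hyv
      exact mem_branch.mpr (hleaf t ht ▸ hlt)
    have := Finset.card_le_card hsub
    rw [Finset.card_erase_of_mem (Finset.mem_univ v), Finset.card_univ] at this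
    omega
  · push Not at hleaf
    obtain ⟨w', hw', hne⟩ := hleaf
    have := hG.card_branch_add_card_branch_lt hw hw' hne.symm
    exact ⟨w', hw', by omega⟩

lemma exists_isVertexDetSet_card_le (hG : G.IsTree) {T : Finset (Sym2 V)}
    (hT : IsEdgeDetSet G T) :
    ∃ S : Finset V, S.card ≤ T.card ∧ IsVertexDetSet G S := by
  classical
  have heavy_end : ∀ e ∈ T, ∃ u v, e = s(u, v) ∧ G.Adj u v ∧
      Fintype.card V ≤ 2 * (G.branch u v).card := by
    intro e he
    induction e using Sym2.ind with
    | _ u v =>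
      have huv : G.Adj u v := hT.1 he
      have := hG.card_branch_add_card_branch huv
      by_cases hheavy : Fintype.card V ≤ 2 * (G.branch u v).card
      · exact ⟨u, v, rfl, huv, hheavy⟩
      · exact ⟨v, u, Sym2.eq_swap, huv.symm, by omega⟩
  have := hG.connected.nonempty
  choose! tail head hp hadj hheavy using heavy_end
  refine ⟨T.image tail, Finset.card_image_le, fun φ hφ => hT.2 φ fun e he => ?_⟩
  have htail : φ (tail e) = tail e := hφ _ (Finset.mem_image_of_mem _ he)
  have hhead : φ (head e) = head e :=
    hG.apply_eq_of_card_le_two_mul_card_branch (hadj e he) (hheavy e he) htail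
  rw [hp e he, Sym2.map_mk, htail, hhead]

lemma exists_isEdgeDetSet_card_le (hG : G.IsTree) (hcard : 3 ≤ Fintype.card V)
    {S : Finset V} (hS : IsVertexDetSet G S) :
    ∃ T : Finset (Sym2 V), T.card ≤ S.card ∧ IsEdgeDetSet G T := by
  classical
  choose w hw hunbal using hG.exists_adj_two_mul_card_branch_ne hcard
  refine ⟨S.image fun v => s(v, w v), Finset.card_image_le, fun e he => ?_,
    fun φ hφ => hS φ fun v hv => ?_⟩
  · obtain ⟨v, -, rfl⟩ := Finset.mem_image.mp he
    exact hw v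
  · have hfix := hφ _ (Finset.mem_image_of_mem _ hv)
    rw [Sym2.map_mk, Sym2.eq_iff] at hfix
    rcases hfix with ⟨hfixed, -⟩ | ⟨hswap, hswap'⟩
    · exact hfixed
    · exact absurd (hG.two_mul_card_branch_eq_of_swap (hw v) hswap hswap') (hunbal v)

end IsTree

end SimpleGraph

lemma Nat.sInf_le_sInf_of_forall_exists_le {A B : Set ℕ} (hA : A.Nonempty)
    (h : ∀ a ∈ A, ∃ b ∈ B, b ≤ a) : sInf B ≤ sInf A := by
  obtain ⟨b, hb, hba⟩ := h _ (Nat.sInf_mem hA)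
  exact (Nat.sInf_le hb).trans hba

theorem detNum_eq_detIndex_of_tree {V : Type*} [Fintype V] (G : SimpleGraph V)
    (hconn : G.Connected) (hacyc : G.IsAcyclic) (hcard : 3 ≤ Fintype.card V) :
    detNum G = detIndex G := by
  have hG : G.IsTree := ⟨hconn, hacyc⟩
  have vertex_to_edge : ∀ k ∈ {k | ∃ S : Finset V, S.card = k ∧ IsVertexDetSet G ↑S},
      ∃ l ∈ {k | ∃ T : Finset (Sym2 V), T.card = k ∧ IsEdgeDetSet G ↑T}, l ≤ k := by
    rintro _ ⟨S, rfl, hS⟩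
    obtain ⟨T, hle, hT⟩ := hG.exists_isEdgeDetSet_card_le hcard hS
    exact ⟨_, ⟨T, rfl, hT⟩, hle⟩
  have edge_to_vertex : ∀ k ∈ {k | ∃ T : Finset (Sym2 V), T.card = k ∧ IsEdgeDetSet G ↑T},
      ∃ l ∈ {k | ∃ S : Finset V, S.card = k ∧ IsVertexDetSet G ↑S}, l ≤ k := by
    rintro _ ⟨T, rfl, hT⟩
    obtain ⟨S, hle, hS⟩ := hG.exists_isVertexDetSet_card_le hT
    exact ⟨_, ⟨S, rfl, hS⟩, hle⟩
  have hvertex : {k | ∃ S : Finset V, S.card = k ∧ IsVertexDetSet G ↑S}.Nonempty :=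
    ⟨_, Finset.univ, rfl, fun φ hφ w => hφ w (Finset.mem_univ w)⟩
  obtain ⟨l, hedge, -⟩ := vertex_to_edge _ hvertex.some_mem
  exact le_antisymm (Nat.sInf_le_sInf_of_forall_exists_le ⟨l, hedge⟩ edge_to_vertex)
    (Nat.sInf_le_sInf_of_forall_exists_le hvertex vertex_to_edge)
end
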